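/- For ζ = x + iy ∈ ℂ and q = e^{iπτ} with τ in the upper half plane, Σ_{i=1}^4 ϑᵢ(ζ|τ)·ϑᵢ(ζ̄|τ) = 2·ϑ₃(2x|2τ)·ϑ₃(iy|τ/2), where ϑᵢ(ζ|τ) = ϑᵢ(ζ, e^{iπτ}) are the four Jacobi theta functions defined by their Fourier series. -/

import Mathlib

/-!
Write `ϑ₃`, `ϑ₂` as `Σ q^{a²} e^{2iaζ}` over `a ∈ ℤ`, resp. `a ∈ ℤ + ½`, and `ϑ₄`, `ϑ₁` as their
translates by `π/2`, which multiply the `a`-th term by `e^{iπa}`. Then `ϑ₃ϑ₃ + ϑ₄ϑ₄` and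
`ϑ₂ϑ₂ + ϑ₁ϑ₁` at `(ζ, ζ')` are the double sums over `ℤ²`, resp. `(ℤ + ½)²`, of
`(1 + e^{iπ(a+b)}) q^{a² + b²} e^{2i(aζ + bζ')}`, and the weight kills the points with `a + b` odd.
The surviving points are exactly `(k + l/2, k - l/2)` with `k, l ∈ ℤ` (`l` even from `ℤ²`, `l` odd
from `(ℤ + ½)²`), and since `a² + b² = 2k² + l²/2` and `aζ + bζ' = k(ζ + ζ') + l(ζ - ζ')/2`, the sum
over them factors as `ϑ₃(ζ + ζ'|2τ) ϑ₃((ζ - ζ')/2|τ/2)`. Take `ζ' = ζ̄`.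
-/

open Complex

/-- `ϑ₁(ζ|τ)`. -/
noncomputable def theta1 (ζ τ : ℂ) : ℂ :=
  ∑' k : ℤ, (-1 : ℂ) ^ k * Complex.I * Complex.exp ((2 * (k : ℂ) + 1) * Complex.I * ζ) *
    Complex.exp ((Real.pi : ℂ) * Complex.I * τ * ((k : ℂ) + 1 / 2) ^ 2)

/-- `ϑ₂(ζ|τ)`. -/
noncomputable def theta2 (ζ τ : ℂ) : ℂ :=
  ∑' k : ℤ, Complex.exp ((2 * (k : ℂ) + 1) * Complex.I * ζ) *
    Complex.exp ((Real.pi : ℂ) * Complex.I * τ * ((k : ℂ) + 1 / 2) ^ 2)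

/-- `ϑ₃(ζ|τ)`. -/
noncomputable def theta3 (ζ τ : ℂ) : ℂ :=
  ∑' k : ℤ, Complex.exp (2 * (k : ℂ) * Complex.I * ζ) *
    Complex.exp ((Real.pi : ℂ) * Complex.I * τ * (k : ℂ) ^ 2)

/-- `ϑ₄(ζ|τ)`. -/
noncomputable def theta4 (ζ τ : ℂ) : ℂ :=
  ∑' k : ℤ, (-1 : ℂ) ^ k * Complex.exp (2 * (k : ℂ) * Complex.I * ζ) *
    Complex.exp ((Real.pi : ℂ) * Complex.I * τ * (k : ℂ) ^ 2)

open Real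

noncomputable def thetaTerm (τ ζ a : ℂ) : ℂ :=
  cexp (π * I * τ * a ^ 2 + 2 * I * a * ζ)

noncomputable def thetaSeries (τ ζ c : ℂ) : ℂ :=
  ∑' n : ℤ, thetaTerm τ ζ (n + c)

lemma thetaTerm_int_add (τ ζ c : ℂ) (n : ℤ) :
    thetaTerm τ ζ (n + c) = jacobiTheta₂_term n (ζ / π + c * τ) τ * thetaTerm τ ζ c := by
  have hπ : (π : ℂ) ≠ 0 := ofReal_ne_zero.mpr pi_ne_zero
  rw [thetaTerm, thetaTerm, jacobiTheta₂_term, ← Complex.exp_add]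
  congr 1
  field_simp
  ring

lemma summable_norm_thetaTerm_int_add {τ : ℂ} (hτ : 0 < τ.im) (ζ c : ℂ) :
    Summable fun n : ℤ => ‖thetaTerm τ ζ (n + c)‖ := by
  simp_rw [thetaTerm_int_add, norm_mul]
  exact (summable_norm_iff.mpr ((summable_jacobiTheta₂_term_iff _ τ).mpr hτ)).mul_right _

lemma hasSum_thetaTerm_mul_thetaTerm {τ τ' : ℂ} (hτ : 0 < τ.im) (hτ' : 0 < τ'.im)
    (ζ ζ' c c' : ℂ) :
    HasSum (fun p : ℤ × ℤ => thetaTerm τ ζ (p.1 + c) * thetaTerm τ' ζ' (p.2 + c'))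
      (thetaSeries τ ζ c * thetaSeries τ' ζ' c') := by
  have h := summable_norm_thetaTerm_int_add hτ ζ c
  have h' := summable_norm_thetaTerm_int_add hτ' ζ' c'
  rw [thetaSeries, thetaSeries, tsum_mul_tsum_of_summable_norm h h']
  exact (summable_mul_of_summable_norm h h').hasSum

lemma thetaTerm_add_pi_div_two (τ ζ a : ℂ) :
    thetaTerm τ (ζ + π / 2) a = cexp (π * I * a) * thetaTerm τ ζ a := by
  rw [thetaTerm, thetaTerm, ← Complex.exp_add]
  congr 1
  ring

lemma thetaTerm_mul_thetaTerm (τ ζ ζ' k l : ℂ) :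
    thetaTerm τ ζ (k + l / 2) * thetaTerm τ ζ' (k - l / 2) =
      thetaTerm (2 * τ) (ζ + ζ') k * thetaTerm (τ / 2) ((ζ - ζ') / 2) l := by
  simp only [thetaTerm, ← Complex.exp_add]
  congr 1
  ring

lemma exp_pi_mul_I_int (n : ℤ) : cexp (π * I * n) = (-1) ^ n := by
  rw [mul_comm, exp_int_mul, exp_pi_mul_I]

lemma exp_pi_mul_I_int_add_half (n : ℤ) : cexp (π * I * (n + 1 / 2)) = (-1) ^ n * I := by
  rw [mul_add, Complex.exp_add, exp_pi_mul_I_int, mul_one_div, mul_div_right_comm,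
    exp_pi_div_two_mul_I]

lemma theta3_eq_thetaSeries (ζ τ : ℂ) : theta3 ζ τ = thetaSeries τ ζ 0 := by
  refine tsum_congr fun k => ?_
  rw [thetaTerm, ← Complex.exp_add]
  congr 1
  ring

lemma theta4_eq_thetaSeries (ζ τ : ℂ) : theta4 ζ τ = thetaSeries τ (ζ + π / 2) 0 := by
  refine tsum_congr fun k => ?_
  rw [thetaTerm_add_pi_div_two, add_zero, exp_pi_mul_I_int, thetaTerm, mul_assoc,
    ← Complex.exp_add]
  congr 2
  ring

lemma theta1_eq_thetaSeries (ζ τ : ℂ) : theta1 ζ τ = thetaSeries τ (ζ + π / 2) (1 / 2) := by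
  refine tsum_congr fun k => ?_
  rw [thetaTerm_add_pi_div_two, exp_pi_mul_I_int_add_half, thetaTerm, mul_assoc,
    ← Complex.exp_add]
  congr 2
  ring

lemma theta2_eq_thetaSeries (ζ τ : ℂ) : theta2 ζ τ = thetaSeries τ ζ (1 / 2) := by
  refine tsum_congr fun k => ?_
  rw [thetaTerm, ← Complex.exp_add]
  congr 1
  ring

lemma HasSum.even_add_odd_snd {M : Type*} [AddCommMonoid M] [TopologicalSpace M]
    [ContinuousAdd M] {f : ℤ × ℤ → M} {a b : M}
    (he : HasSum (fun p : ℤ × ℤ => f (p.1, 2 * p.2)) a)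
    (ho : HasSum (fun p : ℤ × ℤ => f (p.1, 2 * p.2 + 1)) b) : HasSum f (a + b) := by
  have hinj₀ : Function.Injective fun p : ℤ × ℤ => (p.1, 2 * p.2) := fun p q h => by
    simp only [Prod.ext_iff] at h ⊢; omega
  have hinj₁ : Function.Injective fun p : ℤ × ℤ => (p.1, 2 * p.2 + 1) := fun p q h => by
    simp only [Prod.ext_iff] at h ⊢; omega
  have hrange₀ : Set.range (fun p : ℤ × ℤ => (p.1, 2 * p.2)) = Prod.snd ⁻¹' {n | Even n} := by
    ext ⟨k, l⟩; simp [even_iff_exists_two_mul, eq_comm]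
  have hrange₁ : Set.range (fun p : ℤ × ℤ => (p.1, 2 * p.2 + 1)) = Prod.snd ⁻¹' {n | Odd n} := by
    ext ⟨k, l⟩; simp [Odd, eq_comm]
  refine (hinj₀.hasSum_range_iff.2 he).add_isCompl ?_ (hinj₁.hasSum_range_iff.2 ho)
  rw [hrange₀, hrange₁]
  exact Int.isCompl_even_odd.preimage Prod.snd

lemma hasSum_rotatedLattice {Φ : ℂ → ℂ → ℂ} {S₀ S₁ : ℂ}
    (hΦ : ∀ (a b : ℂ) (m : ℤ), a + b = 2 * m + 1 → Φ a b = 0)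
    (h₀ : HasSum (fun p : ℤ × ℤ => Φ p.1 p.2) S₀)
    (h₁ : HasSum (fun p : ℤ × ℤ => Φ (p.1 + 1 / 2) (p.2 + 1 / 2)) S₁) :
    HasSum (fun p : ℤ × ℤ => Φ (p.1 + p.2 / 2) (p.1 - p.2 / 2)) (S₀ + S₁) := by
  refine HasSum.even_add_odd_snd ?_ ?_
  · have hg : Function.Injective fun p : ℤ × ℤ => (p.1 + p.2, p.1 - p.2) := fun p q h => by
      simp only [Prod.ext_iff] at h ⊢; omega
    refine ((hg.hasSum_iff ?_).2 h₀).congr_fun fun p => ?_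
    · rintro ⟨a, b⟩ hab
      obtain ⟨r, hr⟩ | ⟨r, hr⟩ := Int.even_or_odd (a + b)
      · exact absurd ⟨(r, a - r), by simp only [Prod.ext_iff]; omega⟩ hab
      · exact hΦ a b r (by exact_mod_cast hr)
    · simp only [Function.comp_apply]
      congr 1 <;> push_cast <;> ring
  · have hg : Function.Injective fun p : ℤ × ℤ => (p.1 + p.2, p.1 - p.2 - 1) := fun p q h => by
      simp only [Prod.ext_iff] at h ⊢; omega
    refine ((hg.hasSum_iff ?_).2 h₁).congr_fun fun p => ?_
    · rintro ⟨a, b⟩ hab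
      obtain ⟨r, hr⟩ | ⟨r, hr⟩ := Int.even_or_odd (a + b)
      · have hr' : (a + b : ℂ) = r + r := by exact_mod_cast hr
        exact hΦ _ _ r (by linear_combination hr')
      · exact absurd ⟨(r + 1, a - r - 1), by simp only [Prod.ext_iff]; omega⟩ hab
    · simp only [Function.comp_apply]
      congr 1 <;> push_cast <;> ring

theorem sum_theta_mul_theta_eq_two_mul_theta3_mul_theta3 {τ : ℂ} (hτ : 0 < τ.im) (ζ ζ' : ℂ) :
    theta1 ζ τ * theta1 ζ' τ + theta2 ζ τ * theta2 ζ' τ + theta3 ζ τ * theta3 ζ' τ +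
        theta4 ζ τ * theta4 ζ' τ =
      2 * theta3 (ζ + ζ') (2 * τ) * theta3 ((ζ - ζ') / 2) (τ / 2) := by
  have h2τ : 0 < (2 * τ).im := by simpa using hτ
  have hτ2 : 0 < (τ / 2).im := by simpa using hτ
  set Φ : ℂ → ℂ → ℂ := fun a b => thetaTerm τ ζ a * thetaTerm τ ζ' b +
    thetaTerm τ (ζ + π / 2) a * thetaTerm τ (ζ' + π / 2) b
  have hΦ_eq (a b : ℂ) :
      Φ a b = (1 + cexp (π * I * (a + b))) * (thetaTerm τ ζ a * thetaTerm τ ζ' b) := by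
    simp only [Φ, thetaTerm_add_pi_div_two, mul_add, Complex.exp_add]
    ring
  have hodd (a b : ℂ) (m : ℤ) (h : a + b = 2 * m + 1) : Φ a b = 0 := by
    rw [hΦ_eq, h, show (2 * m + 1 : ℂ) = (2 * m + 1 : ℤ) by push_cast; ring, exp_pi_mul_I_int,
      (odd_two_mul_add_one m).neg_one_zpow]
    ring
  have h₀ : HasSum (fun p : ℤ × ℤ => Φ p.1 p.2)
      (theta3 ζ τ * theta3 ζ' τ + theta4 ζ τ * theta4 ζ' τ) := by
    rw [theta3_eq_thetaSeries, theta3_eq_thetaSeries, theta4_eq_thetaSeries,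
      theta4_eq_thetaSeries]
    simpa only [add_zero] using (hasSum_thetaTerm_mul_thetaTerm hτ hτ ζ ζ' 0 0).add
      (hasSum_thetaTerm_mul_thetaTerm hτ hτ _ _ 0 0)
  have h₁ : HasSum (fun p : ℤ × ℤ => Φ (p.1 + 1 / 2) (p.2 + 1 / 2))
      (theta2 ζ τ * theta2 ζ' τ + theta1 ζ τ * theta1 ζ' τ) := by
    rw [theta2_eq_thetaSeries, theta2_eq_thetaSeries, theta1_eq_thetaSeries,
      theta1_eq_thetaSeries]
    exact (hasSum_thetaTerm_mul_thetaTerm hτ hτ ζ ζ' _ _).add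
      (hasSum_thetaTerm_mul_thetaTerm hτ hτ _ _ _ _)
  have hR : HasSum (fun p : ℤ × ℤ => Φ (p.1 + p.2 / 2) (p.1 - p.2 / 2))
      (2 * (theta3 (ζ + ζ') (2 * τ) * theta3 ((ζ - ζ') / 2) (τ / 2))) := by
    rw [theta3_eq_thetaSeries, theta3_eq_thetaSeries]
    refine ((hasSum_thetaTerm_mul_thetaTerm h2τ hτ2 _ _ 0 0).mul_left 2).congr_fun fun p => ?_
    have hexp : cexp (π * I * (p.1 + p.2 / 2 + (p.1 - p.2 / 2))) = 1 := by
      rw [← exp_int_mul_two_pi_mul_I p.1]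
      ring_nf
    rw [hΦ_eq, hexp, thetaTerm_mul_thetaTerm, add_zero, add_zero]
    ring
  linear_combination (hasSum_rotatedLattice hodd h₀ h₁).unique hR

/-- For `ζ = x + iy` and `τ` in the upper half plane,
`Σ_{i=1}^4 ϑᵢ(ζ|τ)ϑᵢ(ζ̄|τ) = 2 ϑ₃(2x|2τ) ϑ₃(iy|τ/2)`. -/
theorem sum_theta_products (x y : ℝ) (τ : ℂ) (hτ : 0 < τ.im) :
    theta1 ((x : ℂ) + (y : ℂ) * Complex.I) τ * theta1 ((x : ℂ) - (y : ℂ) * Complex.I) τ +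
      theta2 ((x : ℂ) + (y : ℂ) * Complex.I) τ * theta2 ((x : ℂ) - (y : ℂ) * Complex.I) τ +
      theta3 ((x : ℂ) + (y : ℂ) * Complex.I) τ * theta3 ((x : ℂ) - (y : ℂ) * Complex.I) τ +
      theta4 ((x : ℂ) + (y : ℂ) * Complex.I) τ * theta4 ((x : ℂ) - (y : ℂ) * Complex.I) τ =
    2 * theta3 (2 * (x : ℂ)) (2 * τ) * theta3 (Complex.I * (y : ℂ)) (τ / 2) := by
  have h := sum_theta_mul_theta_eq_two_mul_theta3_mul_theta3 hτ (x + y * I) (x - y * I)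
  rwa [show (x + y * I + (x - y * I) : ℂ) = 2 * x by ring,
    show (x + y * I - (x - y * I) : ℂ) / 2 = I * y by ring] at h
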